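/- Let L₈ be the 3-dimensional complex algebra with basis e₁, e₂, e₃ and nonzero products e₁e₃ = e₂, e₃e₃ = e₁. Then every automorphism of L₈ has matrix with rows (α₉², 0, α₃), (α₃α₉, α₉³, α₆), (0, 0, α₉) for some α₃, α₆, α₉ ∈ ℂ with α₉ ≠ 0, and conversely every such matrix defines an automorphism. -/

import Mathlib

/-- Multiplication of the algebra `L₈` on `ℂ³` (standard basis `e₁, e₂, e₃`),
with nonzero products `e₁e₃ = e₂`, `e₃e₃ = e₁`. -/
def mulL8 (a b : Fin 3 → ℂ) : Fin 3 → ℂ :=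
  ![a 2 * b 2, a 0 * b 2, 0]

theorem LinearMap.bijective_iff_isUnit_det_toMatrix' {R n : Type*} [CommRing R] [Fintype n]
    [DecidableEq n] (f : (n → R) →ₗ[R] n → R) :
    Function.Bijective f ↔ IsUnit (LinearMap.toMatrix' f).det := by
  rw [← Module.End.isUnit_iff, LinearMap.isUnit_iff_isUnit_det, LinearMap.det_toMatrix']

namespace L8

open Matrix

def autMatrix (α₃ α₆ α₉ : ℂ) : Matrix (Fin 3) (Fin 3) ℂ :=
  !![α₉ ^ 2, 0, α₃; α₃ * α₉, α₉ ^ 3, α₆; 0, 0, α₉]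

theorem det_autMatrix (α₃ α₆ α₉ : ℂ) : (autMatrix α₃ α₆ α₉).det = α₉ ^ 6 := by
  simp only [autMatrix, Matrix.det_fin_three, Matrix.of_apply, Matrix.cons_val', Matrix.cons_val,
    Matrix.empty_val', Matrix.cons_val_fin_one]
  ring

theorem autMatrix_mulVec_mulL8 (α₃ α₆ α₉ : ℂ) (x y : Fin 3 → ℂ) :
    autMatrix α₃ α₆ α₉ *ᵥ mulL8 x y =
      mulL8 (autMatrix α₃ α₆ α₉ *ᵥ x) (autMatrix α₃ α₆ α₉ *ᵥ y) := by
  ext i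
  fin_cases i <;>
    simp [autMatrix, mulL8, Matrix.mulVec, dotProduct, Fin.sum_univ_three] <;> ring

theorem mulL8_single_two_single_two :
    mulL8 (Pi.single 2 1) (Pi.single 2 1) = Pi.single 0 1 := by
  ext i; fin_cases i <;> simp [mulL8]

theorem mulL8_single_zero_single_two :
    mulL8 (Pi.single 0 1) (Pi.single 2 1) = Pi.single 1 1 := by
  ext i; fin_cases i <;> simp [mulL8]

variable {g : (Fin 3 → ℂ) →ₗ[ℂ] (Fin 3 → ℂ)}
  (hmul : ∀ x y : Fin 3 → ℂ, g (mulL8 x y) = mulL8 (g x) (g y))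
include hmul

/-- A multiplicative linear map is determined by the image `v` of `e₃`, since `e₁ = e₃e₃` and
`e₂ = e₁e₃`. -/
theorem toMatrix'_eq_autMatrix_of_map_mulL8 :
    let v := g (Pi.single 2 1)
    LinearMap.toMatrix' g = autMatrix (v 0) (v 1) (v 2) := by
  intro v
  have he₁ : g (Pi.single 0 1) = mulL8 v v := by
    rw [← mulL8_single_two_single_two, hmul]
  have he₂ : g (Pi.single 1 1) = mulL8 (mulL8 v v) v := by
    rw [← mulL8_single_zero_single_two, hmul, he₁]
  ext i j
  rw [LinearMap.toMatrix'_apply]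
  fin_cases i <;> fin_cases j <;> simp [autMatrix, mulL8, he₁, he₂, v] <;> ring

theorem map_single_two_apply_two_ne_zero (hinj : Function.Injective g) :
    g (Pi.single 2 1) 2 ≠ 0 := by
  intro h
  have he₁ : g (Pi.single 0 1) = 0 := by
    rw [← mulL8_single_two_single_two, hmul]
    ext i; fin_cases i <;> simp [mulL8, h]
  simpa using congrFun (hinj (he₁.trans g.map_zero.symm)) 0

end L8

/-- A linear map `g : L₈ → L₈` is an algebra automorphism iff its matrix with
respect to `(e₁,e₂,e₃)` has rows `(α₉², 0, α₃), (α₃α₉, α₉³, α₆), (0, 0, α₉)`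
for some `α₃, α₆, α₉ ∈ ℂ` with `α₉ ≠ 0`. -/
theorem L8_automorphisms (g : (Fin 3 → ℂ) →ₗ[ℂ] (Fin 3 → ℂ)) :
    (Function.Bijective g ∧ ∀ x y : Fin 3 → ℂ, g (mulL8 x y) = mulL8 (g x) (g y)) ↔
    ∃ α₃ α₆ α₉ : ℂ, α₉ ≠ 0 ∧
      LinearMap.toMatrix' g = !![α₉ ^ 2, 0, α₃; α₃ * α₉, α₉ ^ 3, α₆; 0, 0, α₉] := by
  constructor
  · rintro ⟨hbij, hmul⟩
    exact ⟨_, _, _, L8.map_single_two_apply_two_ne_zero hmul hbij.injective,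
      L8.toMatrix'_eq_autMatrix_of_map_mulL8 hmul⟩
  · rintro ⟨α₃, α₆, α₉, hα₉, hM⟩
    change LinearMap.toMatrix' g = L8.autMatrix α₃ α₆ α₉ at hM
    have hg : g = Matrix.toLin' (L8.autMatrix α₃ α₆ α₉) := by
      rw [← LinearMap.toMatrix'_symm, ← hM, LinearEquiv.symm_apply_apply]
    refine ⟨?_, fun x y => ?_⟩
    · rw [LinearMap.bijective_iff_isUnit_det_toMatrix', hM]
      exact (L8.det_autMatrix α₃ α₆ α₉).symm ▸ (pow_ne_zero 6 hα₉).isUnit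
    · simp only [hg, Matrix.toLin'_apply, L8.autMatrix_mulVec_mulL8]
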